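/- arXiv:2501.11915 — 4 statements merged into one kernel-verified Lean document; each statement's English description precedes it below -/
import Mathlib

section
/- Under the trajectory setup, suppose there exists β ≥ 0 such that B(y)² ≤ β² r(y)² for all y ∈ ℝⁿ. Then |Ĵ(x(0)) − J| ≤ β·J. -/
open Matrix Filter Topology Set MeasureTheory

/-!
Along the trajectory, `d/dt Ĵ(x(t)) = ⟨∇Ĵ, f + G u⟩ = B(x(t)) - r(x(t))`, and the hypothesis says
`|B| ≤ β r` because `r ≥ 0`. Integrating the two one-sided bounds on the derivative over `[0, T]`
gives `|Ĵ(x(T)) - Ĵ(x(0)) + ∫₀ᵀ r(x)| ≤ β ∫₀ᵀ r(x)`; letting `T → ∞`, `Ĵ(x(T)) → Ĵ(0) = 0`.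
-/

theorem ContinuousLinearMap.sum_smul_proj_apply {ι 𝕜 : Type*} [Fintype ι] [CommSemiring 𝕜]
    [TopologicalSpace 𝕜] [IsTopologicalSemiring 𝕜] (g v : ι → 𝕜) :
    (∑ i, g i • (ContinuousLinearMap.proj i : (ι → 𝕜) →L[𝕜] 𝕜)) v = g ⬝ᵥ v := by
  simp [dotProduct]

theorem abs_sub_add_integral_le_of_abs_deriv_add_le {φ φ' ρ : ℝ → ℝ} {a b β : ℝ} (hab : a ≤ b)
    (hφ : ContinuousOn φ (Icc a b)) (hderiv : ∀ t ∈ Ioo a b, HasDerivAt φ (φ' t) t)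
    (hρ : IntervalIntegrable ρ volume a b) (hbound : ∀ t ∈ Ioo a b, |φ' t + ρ t| ≤ β * ρ t) :
    |φ b - φ a + ∫ t in a..b, ρ t| ≤ β * ∫ t in a..b, ρ t := by
  have hρ' : IntegrableOn ρ (Icc a b) := (intervalIntegrable_iff_integrableOn_Icc_of_le hab).1 hρ
  have hderiv' : ∀ t ∈ Ioo a b, HasDerivWithinAt φ (φ' t) (Ioi t) t :=
    fun t ht => (hderiv t ht).hasDerivWithinAt
  have upper : φ b - φ a ≤ ∫ t in a..b, (β - 1) * ρ t :=
    intervalIntegral.sub_le_integral_of_hasDeriv_right_of_le hab hφ hderiv'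
      (hρ'.const_mul _) fun t ht => by linarith [(abs_le.1 (hbound t ht)).2]
  have lower : ∫ t in a..b, -(β + 1) * ρ t ≤ φ b - φ a :=
    intervalIntegral.integral_le_sub_of_hasDeriv_right_of_le hab hφ hderiv'
      (hρ'.const_mul _) fun t ht => by linarith [(abs_le.1 (hbound t ht)).1]
  rw [intervalIntegral.integral_const_mul] at upper lower
  exact abs_le.2 ⟨by linarith, by linarith⟩

theorem abs_sub_le_of_tendsto_integral_of_abs_deriv_add_le {φ φ' ρ : ℝ → ℝ} {β J : ℝ}
    (hderiv : ∀ t, 0 ≤ t → HasDerivAt φ (φ' t) t)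
    (hρ : ∀ T, 0 ≤ T → IntervalIntegrable ρ volume 0 T)
    (hbound : ∀ t, 0 ≤ t → |φ' t + ρ t| ≤ β * ρ t)
    (hφ : Tendsto φ atTop (𝓝 0)) (hJ : Tendsto (fun T => ∫ t in (0 : ℝ)..T, ρ t) atTop (𝓝 J)) :
    |φ 0 - J| ≤ β * J := by
  have hfinite : ∀ T, 0 ≤ T →
      |φ T - φ 0 + ∫ t in (0 : ℝ)..T, ρ t| ≤ β * ∫ t in (0 : ℝ)..T, ρ t :=
    fun T hT => abs_sub_add_integral_le_of_abs_deriv_add_le hT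
      (fun t ht => (hderiv t ht.1).continuousAt.continuousWithinAt)
      (fun t ht => hderiv t ht.1.le) (hρ T hT) fun t ht => hbound t ht.1.le
  have hlim : |0 - φ 0 + J| ≤ β * J :=
    le_of_tendsto_of_tendsto ((hφ.sub_const _).add hJ).abs (hJ.const_mul β)
      (eventually_ge_atTop 0 |>.mono hfinite)
  rwa [zero_sub, neg_add_eq_sub, abs_sub_comm] at hlim

theorem bellman_residual_cost_error_bound_general
    {n m : ℕ}
    (q : (Fin n → ℝ) → ℝ) (u : (Fin n → ℝ) → Fin m → ℝ)
    (f : (Fin n → ℝ) → Fin n → ℝ)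
    (R : (Fin n → ℝ) → Matrix (Fin m) (Fin m) ℝ)
    (G : (Fin n → ℝ) → Matrix (Fin n) (Fin m) ℝ)
    (hq : Continuous q) (hu : Continuous u)
    (hR : Continuous R)
    (hRpsd : ∀ y, (R y).PosSemidef)
    (hqnn : ∀ y, 0 ≤ q y)
    (Jhat : (Fin n → ℝ) → ℝ) (gradJ : (Fin n → ℝ) → Fin n → ℝ)
    (hJd : ∀ y, HasFDerivAt Jhat
      (∑ i, gradJ y i • (ContinuousLinearMap.proj i : (Fin n → ℝ) →L[ℝ] ℝ)) y)
    (hJ0 : Jhat 0 = 0)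
    (r : (Fin n → ℝ) → ℝ)
    (hr : ∀ y, r y = q y + (1 / 2) * (u y ⬝ᵥ (R y *ᵥ u y)))
    (B : (Fin n → ℝ) → ℝ)
    (hB : ∀ y, B y = r y + gradJ y ⬝ᵥ (f y + G y *ᵥ u y))
    (x : ℝ → Fin n → ℝ)
    (hx : ∀ t : ℝ, 0 ≤ t → HasDerivAt x (f (x t) + G (x t) *ᵥ u (x t)) t)
    (hxlim : Tendsto x atTop (𝓝 0))
    (J : ℝ)
    (hJ : Tendsto (fun T => ∫ t in (0:ℝ)..T, r (x t)) atTop (𝓝 J))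
    (β : ℝ) (hβ : 0 ≤ β)
    (hBr : ∀ y : Fin n → ℝ, B y ^ 2 ≤ β ^ 2 * r y ^ 2) :
    |Jhat (x 0) - J| ≤ β * J := by
  have hr_nonneg : ∀ y, 0 ≤ r y := fun y => by
    have := (hRpsd y).dotProduct_mulVec_nonneg (u y)
    simp only [star_trivial] at this
    rw [hr y]; linarith [hqnn y]
  have hB_le : ∀ y, |B y| ≤ β * r y := fun y =>
    abs_le_of_sq_le_sq (mul_pow β (r y) 2 ▸ hBr y) (mul_nonneg hβ (hr_nonneg y))
  have hr_cont : Continuous r := by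
    rw [show r = _ from funext hr]
    exact hq.add (continuous_const.mul (hu.dotProduct (hR.matrix_mulVec hu)))
  have hJhat_deriv : ∀ t, 0 ≤ t →
      HasDerivAt (fun s => Jhat (x s)) (B (x t) - r (x t)) t := fun t ht => by
    have := (hJd (x t)).comp_hasDerivAt t (hx t ht)
    rwa [ContinuousLinearMap.sum_smul_proj_apply, ← sub_eq_of_eq_add' (hB (x t))] at this
  have hJhat_lim : Tendsto (fun s => Jhat (x s)) atTop (𝓝 0) :=
    hJ0 ▸ (hJd 0).continuousAt.tendsto.comp hxlim
  exact abs_sub_le_of_tendsto_integral_of_abs_deriv_add_le hJhat_deriv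
    (fun T hT => (hr_cont.comp_continuousOn fun t ht =>
      (hx t ht.1).continuousAt.continuousWithinAt).intervalIntegrable_of_Icc hT)
    (fun t _ => (sub_add_cancel (B (x t)) (r (x t))).symm ▸ hB_le (x t)) hJhat_lim hJ

/-- Under the trajectory setup, if there is `β ≥ 0` with
`B(y)² ≤ β² r(y)²` for all `y`, then `|Ĵ(x(0)) − J| ≤ β J`. -/
theorem bellman_residual_cost_error_bound
    {n m : ℕ} (hn : 0 < n) (hm : 0 < m)
    (q : (Fin n → ℝ) → ℝ) (u : (Fin n → ℝ) → Fin m → ℝ)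
    (f : (Fin n → ℝ) → Fin n → ℝ)
    (R : (Fin n → ℝ) → Matrix (Fin m) (Fin m) ℝ)
    (G : (Fin n → ℝ) → Matrix (Fin n) (Fin m) ℝ)
    (hq : Continuous q) (hu : Continuous u) (hf : Continuous f)
    (hR : Continuous R) (hG : Continuous G)
    (hRpsd : ∀ y, (R y).PosSemidef)
    (hqnn : ∀ y, 0 ≤ q y)
    (Jhat : (Fin n → ℝ) → ℝ) (gradJ : (Fin n → ℝ) → Fin n → ℝ)
    (hJd : ∀ y, HasFDerivAt Jhat
      (∑ i, gradJ y i • (ContinuousLinearMap.proj i : (Fin n → ℝ) →L[ℝ] ℝ)) y)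
    (hgradc : Continuous gradJ)
    (hJ0 : Jhat 0 = 0)
    (r : (Fin n → ℝ) → ℝ)
    (hr : ∀ y, r y = q y + (1 / 2) * (u y ⬝ᵥ (R y *ᵥ u y)))
    (B : (Fin n → ℝ) → ℝ)
    (hB : ∀ y, B y = r y + gradJ y ⬝ᵥ (f y + G y *ᵥ u y))
    (x : ℝ → Fin n → ℝ)
    (hx : ∀ t : ℝ, 0 ≤ t → HasDerivAt x (f (x t) + G (x t) *ᵥ u (x t)) t)
    (hxlim : Tendsto x atTop (𝓝 0))
    (J : ℝ)
    (hJ : Tendsto (fun T => ∫ t in (0:ℝ)..T, r (x t)) atTop (𝓝 J))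
    (β : ℝ) (hβ : 0 ≤ β)
    (hBr : ∀ y : Fin n → ℝ, B y ^ 2 ≤ β ^ 2 * r y ^ 2) :
    |Jhat (x 0) - J| ≤ β * J :=
  bellman_residual_cost_error_bound_general q u f R G hq hu hR hRpsd hqnn Jhat gradJ hJd hJ0 r hr B
    hB x hx hxlim J hJ β hβ hBr
end

section
/- Under the trajectory setup, suppose β ≥ 0 and B(y) ≤ β r(y) for all y ∈ ℝⁿ. Then J − Ĵ(x(0)) ≤ β·J. -/
open Matrix Filter Topology Set

/-!
Along the trajectory, `d/dt Ĵ(x t) = ⟨∇Ĵ, ẋ⟩ = B(x t) - r(x t) ≤ (β - 1) r(x t)`. Integrating over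
`[0, T]` gives `Ĵ(x T) - Ĵ(x 0) ≤ (β - 1) ∫₀ᵀ r(x t) dt`, and letting `T → ∞` (where `Ĵ(x T) → Ĵ 0 = 0`)
gives `-Ĵ(x 0) ≤ (β - 1) J`.
-/

theorem HasFDerivAt.comp_hasDerivAt_dotProduct {n : ℕ} {V : (Fin n → ℝ) → ℝ}
    {g : Fin n → ℝ} {x : ℝ → Fin n → ℝ} {v : Fin n → ℝ} {t : ℝ}
    (hV : HasFDerivAt V (∑ i, g i • (ContinuousLinearMap.proj i : (Fin n → ℝ) →L[ℝ] ℝ)) (x t))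
    (hx : HasDerivAt x v t) :
    HasDerivAt (fun s => V (x s)) (g ⬝ᵥ v) t :=
  (hV.comp_hasDerivAt t hx).congr_deriv (by simp [dotProduct])

section LyapunovBound

variable {V V' ρ : ℝ → ℝ} {a c : ℝ}

theorem sub_le_mul_integral_of_hasDerivAt_le_mul {b : ℝ} (hab : a ≤ b)
    (hV : ∀ t, a ≤ t → HasDerivAt V (V' t) t) (hV' : ∀ t, a ≤ t → V' t ≤ c * ρ t)
    (hρ : ContinuousOn ρ (Ici a)) :
    V b - V a ≤ c * ∫ t in a..b, ρ t := by
  rw [← intervalIntegral.integral_const_mul]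
  refine intervalIntegral.sub_le_integral_of_hasDeriv_right_of_le hab
    (fun t ht => (hV t ht.1).continuousAt.continuousWithinAt)
    (fun t ht => (hV t ht.1.le).hasDerivWithinAt)
    ((hρ.mono Icc_subset_Ici_self).integrableOn_Icc.const_mul c) (fun t ht => hV' t ht.1.le)

theorem sub_le_mul_of_tendsto_of_hasDerivAt_le_mul {L J : ℝ}
    (hV : ∀ t, a ≤ t → HasDerivAt V (V' t) t) (hV' : ∀ t, a ≤ t → V' t ≤ c * ρ t)
    (hρ : ContinuousOn ρ (Ici a)) (hVlim : Tendsto V atTop (𝓝 L))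
    (hJ : Tendsto (fun T => ∫ t in a..T, ρ t) atTop (𝓝 J)) :
    L - V a ≤ c * J :=
  le_of_tendsto_of_tendsto (hVlim.sub_const _) (hJ.const_mul c) <|
    (eventually_ge_atTop a).mono fun _ hT =>
      sub_le_mul_integral_of_hasDerivAt_le_mul hT hV hV' hρ

end LyapunovBound

theorem bellman_residual_cost_lower_bound_general
    {n m : ℕ}
    (q : (Fin n → ℝ) → ℝ) (u : (Fin n → ℝ) → Fin m → ℝ)
    (f : (Fin n → ℝ) → Fin n → ℝ)
    (R : (Fin n → ℝ) → Matrix (Fin m) (Fin m) ℝ)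
    (G : (Fin n → ℝ) → Matrix (Fin n) (Fin m) ℝ)
    (hq : Continuous q) (hu : Continuous u)
    (hR : Continuous R)
    (Jhat : (Fin n → ℝ) → ℝ) (gradJ : (Fin n → ℝ) → Fin n → ℝ)
    (hJd : ∀ y, HasFDerivAt Jhat
      (∑ i, gradJ y i • (ContinuousLinearMap.proj i : (Fin n → ℝ) →L[ℝ] ℝ)) y)
    (hJ0 : Jhat 0 = 0)
    (r : (Fin n → ℝ) → ℝ)
    (hr : ∀ y, r y = q y + (1 / 2) * (u y ⬝ᵥ (R y *ᵥ u y)))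
    (B : (Fin n → ℝ) → ℝ)
    (hB : ∀ y, B y = r y + gradJ y ⬝ᵥ (f y + G y *ᵥ u y))
    (x : ℝ → Fin n → ℝ)
    (hx : ∀ t : ℝ, 0 ≤ t → HasDerivAt x (f (x t) + G (x t) *ᵥ u (x t)) t)
    (hxlim : Tendsto x atTop (𝓝 0))
    (J : ℝ)
    (hJ : Tendsto (fun T => ∫ t in (0:ℝ)..T, r (x t)) atTop (𝓝 J))
    (β : ℝ)
    (hBr : ∀ y : Fin n → ℝ, B y ≤ β * r y) :
    J - Jhat (x 0) ≤ β * J := by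
  have hrc : Continuous r := by
    rw [funext hr]
    simp only [dotProduct, Matrix.mulVec]
    fun_prop
  have hJx : Tendsto (fun t => Jhat (x t)) atTop (𝓝 0) :=
    hJ0 ▸ (hJd 0).continuousAt.tendsto.comp hxlim
  have key : 0 - Jhat (x 0) ≤ (β - 1) * J :=
    sub_le_mul_of_tendsto_of_hasDerivAt_le_mul
      (fun t ht => (hJd (x t)).comp_hasDerivAt_dotProduct (hx t ht))
      (fun t _ => show _ ≤ (β - 1) * r (x t) by linarith [hB (x t), hBr (x t)])
      (hrc.comp_continuousOn (fun t ht => (hx t ht).continuousAt.continuousWithinAt))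
      hJx hJ
  linarith

/-- Under the trajectory setup, if `β ≥ 0` and
`B(y) ≤ β r(y)` for all `y`, then `J − Ĵ(x(0)) ≤ β J`. -/
theorem bellman_residual_cost_lower_bound
    {n m : ℕ} (hn : 0 < n) (hm : 0 < m)
    (q : (Fin n → ℝ) → ℝ) (u : (Fin n → ℝ) → Fin m → ℝ)
    (f : (Fin n → ℝ) → Fin n → ℝ)
    (R : (Fin n → ℝ) → Matrix (Fin m) (Fin m) ℝ)
    (G : (Fin n → ℝ) → Matrix (Fin n) (Fin m) ℝ)
    (hq : Continuous q) (hu : Continuous u) (hf : Continuous f)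
    (hR : Continuous R) (hG : Continuous G)
    (hRpsd : ∀ y, (R y).PosSemidef)
    (hqnn : ∀ y, 0 ≤ q y)
    (Jhat : (Fin n → ℝ) → ℝ) (gradJ : (Fin n → ℝ) → Fin n → ℝ)
    (hJd : ∀ y, HasFDerivAt Jhat
      (∑ i, gradJ y i • (ContinuousLinearMap.proj i : (Fin n → ℝ) →L[ℝ] ℝ)) y)
    (hgradc : Continuous gradJ)
    (hJ0 : Jhat 0 = 0)
    (r : (Fin n → ℝ) → ℝ)
    (hr : ∀ y, r y = q y + (1 / 2) * (u y ⬝ᵥ (R y *ᵥ u y)))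
    (B : (Fin n → ℝ) → ℝ)
    (hB : ∀ y, B y = r y + gradJ y ⬝ᵥ (f y + G y *ᵥ u y))
    (x : ℝ → Fin n → ℝ)
    (hx : ∀ t : ℝ, 0 ≤ t → HasDerivAt x (f (x t) + G (x t) *ᵥ u (x t)) t)
    (hxlim : Tendsto x atTop (𝓝 0))
    (J : ℝ)
    (hJ : Tendsto (fun T => ∫ t in (0:ℝ)..T, r (x t)) atTop (𝓝 J))
    (β : ℝ) (hβ : 0 ≤ β)
    (hBr : ∀ y : Fin n → ℝ, B y ≤ β * r y) :
    J - Jhat (x 0) ≤ β * J :=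
  bellman_residual_cost_lower_bound_general q u f R G hq hu hR Jhat gradJ hJd hJ0 r hr B hB x hx
    hxlim J hJ β hBr
end

section
/- Under the parametric Bellman setup with the integrability assumptions, for every w ∈ ℝ^{d_w} and every θ ∈ S: the function v ↦ ∫ B(x,v,w,θ)² dμ(x) + η‖v‖² on ℝ^{d_v} is everywhere finite, the matrix L̃(w,θ) is invertible, and v*(w,θ) := −L̃(w,θ)⁻¹ l̃(w,θ) is its unique global minimizer (i.e., the objective at v* is ≤ its value at every v, with equality only at v = v*). -/
open Matrix MeasureTheory
open scoped Kronecker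

noncomputable section

/-- `c(w) = (1, w)` as a column matrix. -/
def cmat {dw : ℕ} (w : Fin dw → ℝ) : Matrix (Unit ⊕ Fin dw) Unit ℝ :=
  Matrix.of fun i _ => Sum.elim (fun _ => (1 : ℝ)) w i

/-- `c(w) ⊗ I_{dv}`, with the column index canonically identified with `Fin dv`. -/
def CI (dv : ℕ) {dw : ℕ} (w : Fin dw → ℝ) :
    Matrix ((Unit ⊕ Fin dw) × Fin dv) (Fin dv) ℝ :=
  (cmat w ⊗ₖ (1 : Matrix (Fin dv) (Fin dv) ℝ)).submatrix id fun j => ((), j)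

/-- The vector `(1, w ⊗ w) ∈ ℝ^{1+dw²}`. -/
def oneKron {dw : ℕ} (w : Fin dw → ℝ) : Unit ⊕ Fin dw × Fin dw → ℝ :=
  Sum.elim (fun _ => (1 : ℝ)) fun p => w p.1 * w p.2

/-- `ψ₀(x) = (q(x), vec(Φ(x) R(x) Φ(x)ᵀ / 2))`, with the `vec` of a `dw × dw` matrix
indexed by (column, row) pairs. -/
def psiZero {n m dw : ℕ} (q : (Fin n → ℝ) → ℝ)
    (R : (Fin n → ℝ) → Matrix (Fin m) (Fin m) ℝ)
    (Φ : (Fin n → ℝ) → Matrix (Fin dw) (Fin m) ℝ) (x : Fin n → ℝ) :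
    Unit ⊕ Fin dw × Fin dw → ℝ :=
  Sum.elim (fun _ => q x) fun p => ((1 / 2 : ℝ) • (Φ x * R x * (Φ x)ᵀ)) p.2 p.1

/-- The `n × (1 + dw)` matrix `[f(x), G(x) Φ(x)ᵀ]`. -/
def brkt {n m dw : ℕ} (f : (Fin n → ℝ) → Fin n → ℝ)
    (G : (Fin n → ℝ) → Matrix (Fin n) (Fin m) ℝ)
    (Φ : (Fin n → ℝ) → Matrix (Fin dw) (Fin m) ℝ) (x : Fin n → ℝ) :
    Matrix (Fin n) (Unit ⊕ Fin dw) ℝ :=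
  Matrix.of fun i => Sum.elim (fun _ => f x i) fun j => (G x * (Φ x)ᵀ) i j

/-- `ψ_k(x) = vec(Dφ(x) · [f_k(x), G_k(x) Φ(x)ᵀ]) ∈ ℝ^{dv(1+dw)}`, with the `vec` of a
`dv × (1+dw)` matrix indexed by (column, row) pairs. -/
def psiK {n m dv dw : ℕ} (Dφ : (Fin n → ℝ) → Matrix (Fin dv) (Fin n) ℝ)
    (f : (Fin n → ℝ) → Fin n → ℝ)
    (G : (Fin n → ℝ) → Matrix (Fin n) (Fin m) ℝ)
    (Φ : (Fin n → ℝ) → Matrix (Fin dw) (Fin m) ℝ) (x : Fin n → ℝ) :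
    (Unit ⊕ Fin dw) × Fin dv → ℝ :=
  fun p => (Dφ x * brkt f G Φ x) p.2 p.1

/-- The (entrywise) Gram matrix `∫ ψ(x) ψ'(x)ᵀ dμ(x)`. -/
def gram {n : ℕ} {ι ι' : Type*} (μ : Measure (Fin n → ℝ))
    (ψ : (Fin n → ℝ) → ι → ℝ) (ψ' : (Fin n → ℝ) → ι' → ℝ) : Matrix ι ι' ℝ :=
  Matrix.of fun a b => ∫ x, ψ x a * ψ' x b ∂μ

/-- `L_{k,k'}(w) = (c(w)⊗I)ᵀ (∫ ψ_k ψ_{k'}ᵀ dμ) (c(w)⊗I) + η I`. -/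
def Lmat {n m K dv dw : ℕ} (μ : Measure (Fin n → ℝ))
    (Dφ : (Fin n → ℝ) → Matrix (Fin dv) (Fin n) ℝ)
    (f : Fin K → (Fin n → ℝ) → Fin n → ℝ)
    (G : Fin K → (Fin n → ℝ) → Matrix (Fin n) (Fin m) ℝ)
    (Φ : (Fin n → ℝ) → Matrix (Fin dw) (Fin m) ℝ)
    (η : ℝ) (k k' : Fin K) (w : Fin dw → ℝ) : Matrix (Fin dv) (Fin dv) ℝ :=
  (CI dv w)ᵀ * gram μ (psiK Dφ (f k) (G k) Φ) (psiK Dφ (f k') (G k') Φ) * CI dv w + η • 1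

/-- `l_k(w) = (c(w)⊗I)ᵀ (∫ ψ_k ψ₀ᵀ dμ) (1, w⊗w)`. -/
def lvec {n m K dv dw : ℕ} (μ : Measure (Fin n → ℝ))
    (Dφ : (Fin n → ℝ) → Matrix (Fin dv) (Fin n) ℝ)
    (f : Fin K → (Fin n → ℝ) → Fin n → ℝ)
    (G : Fin K → (Fin n → ℝ) → Matrix (Fin n) (Fin m) ℝ)
    (Φ : (Fin n → ℝ) → Matrix (Fin dw) (Fin m) ℝ)
    (q : (Fin n → ℝ) → ℝ)
    (R : (Fin n → ℝ) → Matrix (Fin m) (Fin m) ℝ)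
    (k : Fin K) (w : Fin dw → ℝ) : Fin dv → ℝ :=
  (CI dv w)ᵀ *ᵥ (gram μ (psiK Dφ (f k) (G k) Φ) (psiZero q R Φ) *ᵥ oneKron w)

/-- `L̃(w,θ) = Σ_k Σ_{k'} h_k(θ) h_{k'}(θ) L_{k,k'}(w)`. -/
def Ltilde {n m K dv dw : ℕ} {S : Type*} (μ : Measure (Fin n → ℝ))
    (Dφ : (Fin n → ℝ) → Matrix (Fin dv) (Fin n) ℝ)
    (f : Fin K → (Fin n → ℝ) → Fin n → ℝ)
    (G : Fin K → (Fin n → ℝ) → Matrix (Fin n) (Fin m) ℝ)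
    (Φ : (Fin n → ℝ) → Matrix (Fin dw) (Fin m) ℝ)
    (η : ℝ) (h : Fin K → S → ℝ) (w : Fin dw → ℝ) (θ : S) : Matrix (Fin dv) (Fin dv) ℝ :=
  ∑ k, ∑ k', (h k θ * h k' θ) • Lmat μ Dφ f G Φ η k k' w

/-- `l̃(w,θ) = Σ_k h_k(θ) l_k(w)`. -/
def ltilde {n m K dv dw : ℕ} {S : Type*} (μ : Measure (Fin n → ℝ))
    (Dφ : (Fin n → ℝ) → Matrix (Fin dv) (Fin n) ℝ)
    (f : Fin K → (Fin n → ℝ) → Fin n → ℝ)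
    (G : Fin K → (Fin n → ℝ) → Matrix (Fin n) (Fin m) ℝ)
    (Φ : (Fin n → ℝ) → Matrix (Fin dw) (Fin m) ℝ)
    (q : (Fin n → ℝ) → ℝ)
    (R : (Fin n → ℝ) → Matrix (Fin m) (Fin m) ℝ)
    (h : Fin K → S → ℝ) (w : Fin dw → ℝ) (θ : S) : Fin dv → ℝ :=
  ∑ k, h k θ • lvec μ Dφ f G Φ q R k w

/-- The Bellman residual
`B(x,v,w,θ) = q(x) + ½ wᵀΦ(x)R(x)Φ(x)ᵀw + vᵀ Dφ(x) (Σ_k h_k(θ)(f_k(x) + G_k(x)Φ(x)ᵀ w))`. -/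
def Bres {n m K dv dw : ℕ} {S : Type*}
    (q : (Fin n → ℝ) → ℝ)
    (R : (Fin n → ℝ) → Matrix (Fin m) (Fin m) ℝ)
    (Φ : (Fin n → ℝ) → Matrix (Fin dw) (Fin m) ℝ)
    (f : Fin K → (Fin n → ℝ) → Fin n → ℝ)
    (G : Fin K → (Fin n → ℝ) → Matrix (Fin n) (Fin m) ℝ)
    (Dφ : (Fin n → ℝ) → Matrix (Fin dv) (Fin n) ℝ)
    (h : Fin K → S → ℝ)
    (x : Fin n → ℝ) (v : Fin dv → ℝ) (w : Fin dw → ℝ) (θ : S) : ℝ :=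
  q x + (1 / 2) * (w ⬝ᵥ ((Φ x * R x * (Φ x)ᵀ) *ᵥ w)) +
    v ⬝ᵥ (Dφ x *ᵥ ∑ k, h k θ • (f k x + (G k x * (Φ x)ᵀ) *ᵥ w))

/-!
The Bellman residual is affine in `v`: `B(x,v,w,θ) = ψ₀(x)·(1, w⊗w) + b(x)·v` with
`b(x) = Σ_k h_k(θ) (c(w)⊗I)ᵀ ψ_k(x)`. Since `Σ_k h_k(θ) = 1`, bilinearity of the integral gives
`L̃(w,θ) = ∫ b bᵀ dμ + ηI` and `l̃(w,θ) = (∫ b ψ₀ᵀ dμ) (1, w⊗w)`, and all these integrals are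
finite because the `ψ`'s are square integrable. So the objective is the quadratic
`∫ (ψ₀·(1, w⊗w))² dμ + 2 v·l̃ + vᵀ L̃ v`, whose matrix is a positive semidefinite Gram matrix
plus `ηI`, hence positive definite; completing the square around `-L̃⁻¹ l̃` finishes the proof.
-/

section Gram

variable {ι ι' κ : Type*}

section MemLp

variable {X : Type*} [MeasurableSpace X] {ν : Measure X}

theorem MeasureTheory.MemLp.integrable_fun_mul {f g : X → ℝ} (hf : MemLp f 2 ν)
    (hg : MemLp g 2 ν) : Integrable (fun x => f x * g x) ν :=
  hf.integrable_mul hg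

variable [Fintype ι] [Fintype κ] {p : ENNReal} {ψ : X → ι → ℝ}

theorem MeasureTheory.MemLp.dotProduct_const (hψ : MemLp ψ p ν) (u : ι → ℝ) :
    MemLp (fun x => ψ x ⬝ᵥ u) p ν :=
  memLp_finsetSum _ fun a _ => (hψ.eval a).mul_const (u a)

theorem MeasureTheory.MemLp.mulVec (hψ : MemLp ψ p ν) (M : Matrix κ ι ℝ) :
    MemLp (fun x => M *ᵥ ψ x) p ν :=
  MemLp.of_eval fun i =>
    (funext fun x => dotProduct_comm (ψ x) (M i) : (fun x => ψ x ⬝ᵥ M i) = _) ▸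
      hψ.dotProduct_const (M i)

end MemLp

variable {n : ℕ} {μ : Measure (Fin n → ℝ)}

theorem gram_transpose (ψ : (Fin n → ℝ) → ι → ℝ) (ψ' : (Fin n → ℝ) → ι' → ℝ) :
    (gram μ ψ ψ')ᵀ = gram μ ψ' ψ := by
  ext a b
  simp only [transpose_apply, _root_.gram, of_apply, mul_comm]

variable [Fintype ι] [Fintype ι'] {ψ : (Fin n → ℝ) → ι → ℝ} {ψ' : (Fin n → ℝ) → ι' → ℝ}

theorem gram_mulVec (hψ : MemLp ψ 2 μ) (hψ' : MemLp ψ' 2 μ) (u : ι' → ℝ) :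
    gram μ ψ ψ' *ᵥ u = fun a => ∫ x, ψ x a * (ψ' x ⬝ᵥ u) ∂μ := by
  ext a
  simp only [mulVec, dotProduct, _root_.gram, of_apply, Finset.mul_sum]
  rw [integral_finsetSum]
  · simp only [← mul_assoc, integral_mul_const]
  · intro b _
    simpa only [mul_assoc] using ((hψ.eval a).integrable_fun_mul (hψ'.eval b)).mul_const (u b)

theorem dotProduct_gram_mulVec (hψ : MemLp ψ 2 μ) (hψ' : MemLp ψ' 2 μ) (u : ι → ℝ)
    (u' : ι' → ℝ) : u ⬝ᵥ (gram μ ψ ψ' *ᵥ u') = ∫ x, (u ⬝ᵥ ψ x) * (ψ' x ⬝ᵥ u') ∂μ := by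
  rw [gram_mulVec hψ hψ']
  change ∑ a, u a * _ = ∫ x, (∑ a, u a * ψ x a) * _ ∂μ
  simp only [Finset.sum_mul]
  rw [integral_finsetSum]
  · simp only [mul_assoc, integral_const_mul]
  · intro a _
    simpa only [mul_assoc] using
      ((hψ.eval a).integrable_fun_mul (hψ'.dotProduct_const u')).const_mul (u a)

theorem gram_mulVec_left (hψ : MemLp ψ 2 μ) (hψ' : MemLp ψ' 2 μ) (M : Matrix κ ι ℝ) :
    gram μ (fun x => M *ᵥ ψ x) ψ' = M * gram μ ψ ψ' := by
  ext i b
  simp only [_root_.gram, of_apply, mul_apply, mulVec, dotProduct, Finset.sum_mul]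
  rw [integral_finsetSum]
  · simp only [mul_assoc, integral_const_mul]
  · intro a _
    simpa only [mul_assoc] using
      ((hψ.eval a).integrable_fun_mul (hψ'.eval b)).const_mul (M i a)

theorem gram_mulVec_right (hψ : MemLp ψ 2 μ) (hψ' : MemLp ψ' 2 μ) (N : Matrix κ ι' ℝ) :
    gram μ ψ (fun x => N *ᵥ ψ' x) = gram μ ψ ψ' * Nᵀ := by
  rw [← gram_transpose, gram_mulVec_left hψ' hψ, transpose_mul, gram_transpose]

variable [Fintype κ]

theorem gram_sum_smul_left {ψ : κ → (Fin n → ℝ) → ι → ℝ} (hψ : ∀ k, MemLp (ψ k) 2 μ)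
    (hψ' : MemLp ψ' 2 μ) (c : κ → ℝ) :
    gram μ (fun x => ∑ k, c k • ψ k x) ψ' = ∑ k, c k • gram μ (ψ k) ψ' := by
  ext a b
  simp only [_root_.gram, of_apply, Matrix.sum_apply, Finset.sum_apply, Pi.smul_apply,
    Matrix.smul_apply, smul_eq_mul, Finset.sum_mul]
  rw [integral_finsetSum]
  · simp only [mul_assoc, integral_const_mul]
  · intro k _
    simpa only [mul_assoc] using
      (((hψ k).eval a).integrable_fun_mul (hψ'.eval b)).const_mul (c k)

theorem gram_sum_smul_right (hψ : MemLp ψ 2 μ) {ψ' : κ → (Fin n → ℝ) → ι' → ℝ}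
    (hψ' : ∀ k, MemLp (ψ' k) 2 μ) (c : κ → ℝ) :
    gram μ ψ (fun x => ∑ k, c k • ψ' k x) = ∑ k, c k • gram μ ψ (ψ' k) := by
  rw [← gram_transpose, gram_sum_smul_left hψ' hψ, transpose_sum]
  simp only [transpose_smul, gram_transpose]

theorem posSemidef_gram (hψ : MemLp ψ 2 μ) : (gram μ ψ ψ).PosSemidef := by
  refine posSemidef_iff_dotProduct_mulVec.2 ⟨?_, fun u => ?_⟩
  · rw [IsHermitian, conjTranspose_eq_transpose_of_trivial, gram_transpose]
  · rw [star_trivial, dotProduct_gram_mulVec hψ hψ]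
    exact integral_nonneg fun x => by rw [dotProduct_comm]; exact mul_self_nonneg _

theorem integral_sq_dotProduct_add_dotProduct {ψ₀ : (Fin n → ℝ) → ι' → ℝ}
    (hψ₀ : MemLp ψ₀ 2 μ) (hψ : MemLp ψ 2 μ) (u : ι' → ℝ) (v : ι → ℝ) :
    ∫ x, (ψ₀ x ⬝ᵥ u + ψ x ⬝ᵥ v) ^ 2 ∂μ
      = ∫ x, (ψ₀ x ⬝ᵥ u) ^ 2 ∂μ + 2 * (v ⬝ᵥ (gram μ ψ ψ₀ *ᵥ u))
        + v ⬝ᵥ (gram μ ψ ψ *ᵥ v) := by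
  have hA := hψ₀.dotProduct_const u
  have hB : MemLp (fun x => v ⬝ᵥ ψ x) 2 μ := by
    simpa only [dotProduct_comm] using hψ.dotProduct_const v
  have hexpand : ∀ x, (ψ₀ x ⬝ᵥ u + ψ x ⬝ᵥ v) ^ 2
      = (ψ₀ x ⬝ᵥ u) ^ 2 + 2 * ((v ⬝ᵥ ψ x) * (ψ₀ x ⬝ᵥ u)) + (v ⬝ᵥ ψ x) * (ψ x ⬝ᵥ v) := by
    intro x; rw [dotProduct_comm (ψ x)]; ring
  have hcross := (hB.integrable_fun_mul hA).const_mul 2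
  simp only [hexpand]
  rw [integral_add, integral_add hA.integrable_sq hcross, integral_const_mul,
    dotProduct_gram_mulVec hψ hψ₀, dotProduct_gram_mulVec hψ hψ]
  exacts [hA.integrable_sq.add hcross, hB.integrable_fun_mul (hψ.dotProduct_const v)]

end Gram

theorem Matrix.PosDef.quadratic_min_at_neg_inv_mulVec {ι : Type*} [Fintype ι] [DecidableEq ι]
    {L : Matrix ι ι ℝ} (hL : L.PosDef) (c : ℝ) (l : ι → ℝ) {Q : (ι → ℝ) → ℝ}
    (hQ : ∀ v, Q v = c + 2 * (v ⬝ᵥ l) + v ⬝ᵥ (L *ᵥ v)) (v : ι → ℝ) :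
    Q (-(L⁻¹ *ᵥ l)) ≤ Q v ∧ (Q (-(L⁻¹ *ᵥ l)) = Q v → v = -(L⁻¹ *ᵥ l)) := by
  set vstar := -(L⁻¹ *ᵥ l)
  have hLv : L *ᵥ vstar = -l := by
    rw [mulVec_neg, mulVec_mulVec, mul_nonsing_inv _ ((isUnit_iff_isUnit_det L).1 hL.isUnit),
      one_mulVec]
  have hsymm : ∀ a b : ι → ℝ, a ⬝ᵥ (L *ᵥ b) = b ⬝ᵥ (L *ᵥ a) := fun a b => by
    rw [dotProduct_mulVec, dotProduct_comm, ← mulVec_transpose,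
      ← conjTranspose_eq_transpose_of_trivial, hL.1.eq]
  have hsquare : Q v = Q vstar + (v - vstar) ⬝ᵥ (L *ᵥ (v - vstar)) := by
    have hcross := hsymm vstar v
    simp only [hQ, mulVec_sub, dotProduct_sub, sub_dotProduct, hLv, dotProduct_neg] at hcross ⊢
    linarith
  have hpos : ∀ d : ι → ℝ, d ≠ 0 → 0 < d ⬝ᵥ (L *ᵥ d) := fun d hd => by
    simpa only [star_trivial] using hL.dotProduct_mulVec_pos hd
  refine ⟨?_, fun heq => ?_⟩
  · rcases eq_or_ne (v - vstar) 0 with h0 | h0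
    · rw [hsquare, h0, zero_dotProduct, add_zero]
    · rw [hsquare]; exact le_add_of_nonneg_right (hpos _ h0).le
  · by_contra hne
    have := hpos _ (sub_ne_zero.2 hne)
    linarith [hsquare]

section Bellman

variable {n m dv dw : ℕ}

theorem measurable_psiZero {q : (Fin n → ℝ) → ℝ} {R : (Fin n → ℝ) → Matrix (Fin m) (Fin m) ℝ}
    {Φ : (Fin n → ℝ) → Matrix (Fin dw) (Fin m) ℝ} (hq : Measurable q)
    (hR : ∀ i j, Measurable fun x => R x i j) (hΦ : ∀ i j, Measurable fun x => Φ x i j) :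
    Measurable (psiZero q R Φ) := by
  refine measurable_pi_iff.2 fun s => ?_
  rcases s with _ | ⟨a, b⟩
  · exact hq
  · simp only [psiZero, Sum.elim_inr, Matrix.smul_apply, mul_apply, transpose_apply, smul_eq_mul]
    fun_prop

theorem measurable_psiK {Dφ : (Fin n → ℝ) → Matrix (Fin dv) (Fin n) ℝ}
    {f : (Fin n → ℝ) → Fin n → ℝ} {G : (Fin n → ℝ) → Matrix (Fin n) (Fin m) ℝ}
    {Φ : (Fin n → ℝ) → Matrix (Fin dw) (Fin m) ℝ} (hDφ : ∀ i j, Measurable fun x => Dφ x i j)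
    (hf : Measurable f) (hG : ∀ i j, Measurable fun x => G x i j)
    (hΦ : ∀ i j, Measurable fun x => Φ x i j) : Measurable (psiK Dφ f G Φ) := by
  refine measurable_pi_iff.2 fun ⟨s, i⟩ => ?_
  rcases s with _ | a
  · simp only [psiK, brkt, mul_apply, of_apply, Sum.elim_inl]
    fun_prop
  · simp only [psiK, brkt, mul_apply, of_apply, Sum.elim_inr, transpose_apply]
    fun_prop

theorem psiZero_dotProduct_oneKron (q : (Fin n → ℝ) → ℝ)
    (R : (Fin n → ℝ) → Matrix (Fin m) (Fin m) ℝ) (Φ : (Fin n → ℝ) → Matrix (Fin dw) (Fin m) ℝ)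
    (w : Fin dw → ℝ) (x : Fin n → ℝ) :
    psiZero q R Φ x ⬝ᵥ oneKron w = q x + 1 / 2 * (w ⬝ᵥ ((Φ x * R x * (Φ x)ᵀ) *ᵥ w)) := by
  simp only [dotProduct, Fintype.sum_sum_type, Fintype.sum_prod_type, psiZero, oneKron,
    Sum.elim_inl, Sum.elim_inr, Matrix.smul_apply, smul_eq_mul, mulVec, Finset.mul_sum,
    Finset.univ_unique, Finset.sum_singleton, mul_one]
  rw [Finset.sum_comm]
  exact congrArg _ <| Finset.sum_congr rfl fun i _ => Finset.sum_congr rfl fun j _ => by ring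

theorem CI_transpose_mulVec_psiK (Dφ : (Fin n → ℝ) → Matrix (Fin dv) (Fin n) ℝ)
    (f : (Fin n → ℝ) → Fin n → ℝ) (G : (Fin n → ℝ) → Matrix (Fin n) (Fin m) ℝ)
    (Φ : (Fin n → ℝ) → Matrix (Fin dw) (Fin m) ℝ) (w : Fin dw → ℝ) (x : Fin n → ℝ) :
    (CI dv w)ᵀ *ᵥ psiK Dφ f G Φ x = Dφ x *ᵥ (f x + (G x * (Φ x)ᵀ) *ᵥ w) := by
  ext i
  simp only [mulVec, dotProduct, transpose_apply, Fintype.sum_prod_type, Fintype.sum_sum_type,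
    CI, submatrix_apply, id_eq, kroneckerMap_apply, cmat, of_apply, Sum.elim_inl, Sum.elim_inr,
    one_apply, mul_ite, mul_one, mul_zero, ite_mul, zero_mul, one_mul, Finset.sum_ite_eq',
    Finset.mem_univ, if_true, Finset.univ_unique, Finset.sum_singleton]
  simp only [psiK, mul_apply, brkt, of_apply, Sum.elim_inl, Sum.elim_inr, Pi.add_apply,
    mulVec, dotProduct, transpose_apply, Finset.mul_sum, Finset.sum_mul, mul_add,
    Finset.sum_add_distrib]
  rw [Finset.sum_comm (γ := Fin dw)]
  exact congrArg _ <| Finset.sum_congr rfl fun a _ => Finset.sum_congr rfl fun b _ =>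
    Finset.sum_congr rfl fun c _ => by ring

end Bellman

section Residual

variable {n m K dv dw : ℕ} {S : Type*} {μ : Measure (Fin n → ℝ)}
  {Dφ : (Fin n → ℝ) → Matrix (Fin dv) (Fin n) ℝ} {f : Fin K → (Fin n → ℝ) → Fin n → ℝ}
  {G : Fin K → (Fin n → ℝ) → Matrix (Fin n) (Fin m) ℝ}
  {Φ : (Fin n → ℝ) → Matrix (Fin dw) (Fin m) ℝ}

/-- `b(x) = Dφ(x) Σ_k h_k(θ) (f_k(x) + G_k(x)Φ(x)ᵀw)`, the coefficient of `v` in the residual,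
written through the `ψ_k` so that `L̃(w,θ) - ηI` is its Gram matrix. -/
def residualCoeff (Dφ : (Fin n → ℝ) → Matrix (Fin dv) (Fin n) ℝ)
    (f : Fin K → (Fin n → ℝ) → Fin n → ℝ) (G : Fin K → (Fin n → ℝ) → Matrix (Fin n) (Fin m) ℝ)
    (Φ : (Fin n → ℝ) → Matrix (Fin dw) (Fin m) ℝ) (h : Fin K → S → ℝ) (w : Fin dw → ℝ)
    (θ : S) : (Fin n → ℝ) → Fin dv → ℝ :=
  fun x => ∑ k, h k θ • ((CI dv w)ᵀ *ᵥ psiK Dφ (f k) (G k) Φ x)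

theorem Bres_eq_add_dotProduct (q : (Fin n → ℝ) → ℝ) (R : (Fin n → ℝ) → Matrix (Fin m) (Fin m) ℝ)
    (h : Fin K → S → ℝ) (x : Fin n → ℝ) (v : Fin dv → ℝ) (w : Fin dw → ℝ) (θ : S) :
    Bres q R Φ f G Dφ h x v w θ
      = psiZero q R Φ x ⬝ᵥ oneKron w + residualCoeff Dφ f G Φ h w θ x ⬝ᵥ v := by
  simp only [Bres, residualCoeff, CI_transpose_mulVec_psiK, psiZero_dotProduct_oneKron,
    mulVec_sum, mulVec_smul, dotProduct_comm v]

variable (hψ : ∀ k, MemLp (psiK Dφ (f k) (G k) Φ) 2 μ) (h : Fin K → S → ℝ) (w : Fin dw → ℝ)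
  (θ : S)
include hψ

theorem memLp_residualCoeff : MemLp (residualCoeff Dφ f G Φ h w θ) 2 μ :=
  memLp_finsetSum _ fun k _ => ((hψ k).mulVec _).const_smul (h k θ)

theorem Ltilde_eq_gram_add (η : ℝ) (hsum : ∑ k, h k θ = 1) :
    Ltilde μ Dφ f G Φ η h w θ
      = gram μ (residualCoeff Dφ f G Φ h w θ) (residualCoeff Dφ f G Φ h w θ) + η • 1 := by
  set b : Fin K → (Fin n → ℝ) → Fin dv → ℝ := fun k x => (CI dv w)ᵀ *ᵥ psiK Dφ (f k) (G k) Φ x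
  have hb : ∀ k, MemLp (b k) 2 μ := fun k => (hψ k).mulVec _
  have hsumb : MemLp (fun x => ∑ k, h k θ • b k x) 2 μ := memLp_residualCoeff hψ h w θ
  have hgram : ∀ k k', gram μ (b k) (b k')
      = (CI dv w)ᵀ * gram μ (psiK Dφ (f k) (G k) Φ) (psiK Dφ (f k') (G k') Φ) * CI dv w :=
    fun k k' => by
      rw [gram_mulVec_left (hψ k) (hb k'), gram_mulVec_right (hψ k) (hψ k'),
        transpose_transpose, Matrix.mul_assoc]
  change _ = gram μ (fun x => ∑ k, h k θ • b k x) (fun x => ∑ k, h k θ • b k x) + η • 1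
  rw [gram_sum_smul_left hb hsumb]
  simp only [gram_sum_smul_right (hb _) hb, hgram, Finset.smul_sum, smul_smul, Ltilde, Lmat,
    smul_add, Finset.sum_add_distrib]
  simp only [← Finset.sum_smul, ← Finset.sum_mul, ← Finset.mul_sum, hsum, mul_one, one_mul]

theorem ltilde_eq_gram_mulVec (q : (Fin n → ℝ) → ℝ) (R : (Fin n → ℝ) → Matrix (Fin m) (Fin m) ℝ)
    (hψ₀ : MemLp (psiZero q R Φ) 2 μ) :
    ltilde μ Dφ f G Φ q R h w θ
      = gram μ (residualCoeff Dφ f G Φ h w θ) (psiZero q R Φ) *ᵥ oneKron w := by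
  unfold residualCoeff
  rw [gram_sum_smul_left (fun k => (hψ k).mulVec _) hψ₀, Matrix.sum_mulVec]
  simp only [ltilde, lvec, Matrix.smul_mulVec, gram_mulVec_left (hψ _) hψ₀, mulVec_mulVec]

end Residual

theorem optimal_parametric_cost_solution_general
    {n m K dv dw : ℕ}
    (μ : Measure (Fin n → ℝ))
    (q : (Fin n → ℝ) → ℝ)
    (R : (Fin n → ℝ) → Matrix (Fin m) (Fin m) ℝ)
    (Φ : (Fin n → ℝ) → Matrix (Fin dw) (Fin m) ℝ)
    (f : Fin K → (Fin n → ℝ) → Fin n → ℝ)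
    (G : Fin K → (Fin n → ℝ) → Matrix (Fin n) (Fin m) ℝ)
    (hq : Measurable q)
    (hR : ∀ i j, Measurable fun x => R x i j)
    (hΦ : ∀ i j, Measurable fun x => Φ x i j)
    (hf : ∀ k, Measurable (f k))
    (hG : ∀ k i j, Measurable fun x => G k x i j)
    (Dφ : (Fin n → ℝ) → Matrix (Fin dv) (Fin n) ℝ)
    (hDφ : ∀ i j, Measurable fun x => Dφ x i j)
    (S : Type*) (h : Fin K → S → ℝ)
    (hsum : ∀ θ : S, ∑ k, h k θ = 1)
    (η : ℝ) (hη : 0 < η)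
    (hint0 : Integrable (fun x => ‖psiZero q R Φ x‖ ^ 2) μ)
    (hintk : ∀ k, Integrable (fun x => ‖psiK Dφ (f k) (G k) Φ x‖ ^ 2) μ) :
    ∀ (w : Fin dw → ℝ) (θ : S) (gobj : (Fin dv → ℝ) → ℝ) (vstar : Fin dv → ℝ),
      (∀ v, gobj v = (∫ x, Bres q R Φ f G Dφ h x v w θ ^ 2 ∂μ) + η * ∑ i, v i ^ 2) →
      vstar = -((Ltilde μ Dφ f G Φ η h w θ)⁻¹ *ᵥ ltilde μ Dφ f G Φ q R h w θ) →
      (∀ v : Fin dv → ℝ, Integrable (fun x => Bres q R Φ f G Dφ h x v w θ ^ 2) μ) ∧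
      IsUnit (Ltilde μ Dφ f G Φ η h w θ) ∧
      ∀ v : Fin dv → ℝ, gobj vstar ≤ gobj v ∧ (gobj vstar = gobj v → v = vstar) := by
  intro w θ gobj vstar hgobj rfl
  have hψ₀ : MemLp (psiZero q R Φ) 2 μ := (memLp_two_iff_integrable_sq_norm
    (measurable_psiZero hq hR hΦ).aestronglyMeasurable).2 hint0
  have hψ : ∀ k, MemLp (psiK Dφ (f k) (G k) Φ) 2 μ := fun k => (memLp_two_iff_integrable_sq_norm
    (measurable_psiK hDφ (hf k) (hG k) hΦ).aestronglyMeasurable).2 (hintk k)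
  have hb := memLp_residualCoeff hψ h w θ
  have hL := Ltilde_eq_gram_add hψ h w θ η (hsum θ)
  have hPD : (Ltilde μ Dφ f G Φ η h w θ).PosDef :=
    hL ▸ PosDef.posSemidef_add (posSemidef_gram hb) (PosDef.one.smul hη)
  refine ⟨fun v => ?_, hPD.isUnit, hPD.quadratic_min_at_neg_inv_mulVec
    (∫ x, (psiZero q R Φ x ⬝ᵥ oneKron w) ^ 2 ∂μ) _ fun v => ?_⟩
  · simp only [Bres_eq_add_dotProduct]
    exact ((hψ₀.dotProduct_const _).add (hb.dotProduct_const v)).integrable_sq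
  · have hsq : ∑ i, v i ^ 2 = v ⬝ᵥ v := by simp only [dotProduct, sq]
    simp only [hgobj, Bres_eq_add_dotProduct]
    rw [integral_sq_dotProduct_add_dotProduct hψ₀ hb, hL, ltilde_eq_gram_mulVec hψ h w θ q R hψ₀,
      add_mulVec, smul_mulVec, one_mulVec, dotProduct_add, dotProduct_smul, smul_eq_mul, hsq]
    ring

/-- Under the parametric Bellman setup with the integrability assumptions,
for every `w` and `θ` the objective `v ↦ ∫ B(x,v,w,θ)² dμ + η‖v‖²` is everywhere finite
(the integrand is integrable for every `v`), the matrix `L̃(w,θ)` is invertible, and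
`v* = −L̃(w,θ)⁻¹ l̃(w,θ)` is its unique global minimizer. -/
theorem optimal_parametric_cost_solution
    {n m K dv dw : ℕ} (hn : 0 < n) (hm : 0 < m) (hK : 0 < K) (hdv : 0 < dv) (hdw : 0 < dw)
    (μ : Measure (Fin n → ℝ))
    (q : (Fin n → ℝ) → ℝ)
    (R : (Fin n → ℝ) → Matrix (Fin m) (Fin m) ℝ)
    (Φ : (Fin n → ℝ) → Matrix (Fin dw) (Fin m) ℝ)
    (f : Fin K → (Fin n → ℝ) → Fin n → ℝ)
    (G : Fin K → (Fin n → ℝ) → Matrix (Fin n) (Fin m) ℝ)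
    (hq : Measurable q)
    (hR : ∀ i j, Measurable fun x => R x i j)
    (hΦ : ∀ i j, Measurable fun x => Φ x i j)
    (hf : ∀ k, Measurable (f k))
    (hG : ∀ k i j, Measurable fun x => G k x i j)
    (φ : (Fin n → ℝ) → Fin dv → ℝ)
    (Dφ : (Fin n → ℝ) → Matrix (Fin dv) (Fin n) ℝ)
    (hφ : ∀ x, HasFDerivAt φ (LinearMap.toContinuousLinearMap (Dφ x).mulVecLin) x)
    (hDφ : ∀ i j, Measurable fun x => Dφ x i j)
    (S : Type*) (h : Fin K → S → ℝ)
    (hh01 : ∀ k θ, h k θ ∈ Set.Icc (0 : ℝ) 1)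
    (hsum : ∀ θ : S, ∑ k, h k θ = 1)
    (η : ℝ) (hη : 0 < η)
    (hint0 : Integrable (fun x => ‖psiZero q R Φ x‖ ^ 2) μ)
    (hintk : ∀ k, Integrable (fun x => ‖psiK Dφ (f k) (G k) Φ x‖ ^ 2) μ) :
    ∀ (w : Fin dw → ℝ) (θ : S) (gobj : (Fin dv → ℝ) → ℝ) (vstar : Fin dv → ℝ),
      (∀ v, gobj v = (∫ x, Bres q R Φ f G Dφ h x v w θ ^ 2 ∂μ) + η * ∑ i, v i ^ 2) →
      vstar = -((Ltilde μ Dφ f G Φ η h w θ)⁻¹ *ᵥ ltilde μ Dφ f G Φ q R h w θ) →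
      (∀ v : Fin dv → ℝ, Integrable (fun x => Bres q R Φ f G Dφ h x v w θ ^ 2) μ) ∧
      IsUnit (Ltilde μ Dφ f G Φ η h w θ) ∧
      ∀ v : Fin dv → ℝ, gobj vstar ≤ gobj v ∧ (gobj vstar = gobj v → v = vstar) :=
  optimal_parametric_cost_solution_general μ q R Φ f G hq hR hΦ hf hG Dφ hDφ S h hsum η hη hint0
    hintk
end
end

section
/- Under the strict monomial family setup, the map x ↦ ‖z(x)‖ tends to infinity along the cocompact filter of ℝⁿ (i.e., ‖z(x)‖ → ∞ as ‖x‖ → ∞), where z(x) := (z_1(x), …, z_d(x)) ∈ ℝᵈ and ‖·‖ is the Euclidean norm. -/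
open Filter

/-- For a strict monomial family `z : ℝⁿ → ℝᵈ`, the Euclidean norm
`‖z(x)‖` tends to infinity along the cocompact filter of ℝⁿ (i.e. as `‖x‖ → ∞`). -/
theorem strict_monomial_family_norm_tendsto_atTop (n d : ℕ) (hn : 0 < n) (hd : 0 < d)
    (a : Fin d → Fin n → ℕ)
    (z : Fin d → (Fin n → ℝ) → ℝ)
    (hz : ∀ j x, z j x = ∏ i, x i ^ a j i)
    (hstrict : ∀ x : Fin n → ℝ, (∀ j, z j x = 0) ↔ x = 0) :
    Tendsto (fun x => Real.sqrt (∑ j, z j x ^ 2)) (cocompact (Fin n → ℝ)) atTop := by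
  haveI : Nonempty (Fin n) := ⟨⟨0, hn⟩⟩
  -- every z j has a positive exponent somewhere
  have hApos : ∀ j, ∃ i, a j i ≠ 0 := by
    intro j
    have h0 : z j 0 = 0 := (hstrict 0).2 rfl j
    rw [hz] at h0
    obtain ⟨i, -, hi⟩ := Finset.prod_eq_zero_iff.mp h0
    exact ⟨i, fun h => by simp [h] at hi⟩
  -- for each coordinate i, a pure-power monomial in x i
  have key : ∀ i : Fin n, ∃ j : Fin d, (∀ x, z j x = x i ^ a j i) ∧ a j i ≠ 0 := by
    intro i
    have hne : (Pi.single i (1:ℝ)) ≠ (0 : Fin n → ℝ) := by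
      intro h
      have := congrFun h i
      simp at this
    obtain ⟨j, hj⟩ := not_forall.mp (fun h => hne ((hstrict _).1 h))
    rw [hz] at hj
    have hz0 : ∀ i', i' ≠ i → a j i' = 0 := by
      intro i' hi'
      by_contra h
      apply hj
      apply Finset.prod_eq_zero (Finset.mem_univ i')
      simp [Pi.single_apply, hi', zero_pow h]
    refine ⟨j, fun x => ?_, ?_⟩
    · rw [hz]
      apply Finset.prod_eq_single
      · intro b _ hb
        rw [hz0 b hb, pow_zero]
      · intro h; exact absurd (Finset.mem_univ i) h
    · obtain ⟨i₀, hi₀⟩ := hApos j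
      by_cases h : i₀ = i
      · exact h ▸ hi₀
      · exact absurd (hz0 i₀ h) hi₀
  choose J hJ hJpos using key
  rw [tendsto_atTop]
  intro C
  have hcc : Tendsto (fun x : Fin n → ℝ => ‖x‖) (cocompact _) atTop :=
    tendsto_norm_cocompact_atTop
  filter_upwards [hcc.eventually_ge_atTop (max C 1)] with x hx
  -- pick coordinate achieving the sup norm
  obtain ⟨i, -, hi⟩ := Finset.exists_mem_eq_sup Finset.univ Finset.univ_nonempty
    (fun i => ‖x i‖₊)
  have hxi : ‖x‖ = |x i| := by
    rw [Pi.norm_def, hi]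
    simp
  have h1 : (1:ℝ) ≤ |x i| := hxi ▸ le_trans (le_max_right C 1) hx
  have hCx : C ≤ |x i| := hxi ▸ le_trans (le_max_left C 1) hx
  have hle : |x i| ≤ |z (J i) x| := by
    rw [hJ i x, abs_pow]
    exact le_self_pow₀ h1 (hJpos i)
  calc C ≤ |x i| := hCx
    _ ≤ |z (J i) x| := hle
    _ = Real.sqrt ((z (J i) x) ^ 2) := (Real.sqrt_sq_eq_abs _).symm
    _ ≤ Real.sqrt (∑ j, z j x ^ 2) := by
        apply Real.sqrt_le_sqrt
        exact Finset.single_le_sum (fun j _ => sq_nonneg (z j x)) (Finset.mem_univ _)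
end
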